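/- For k, l > 0, define σ : [0, π/2] → [0, π] by the implicit equation ∫₀^θ sinᵏ t cosˡ t dt = c₁ ∫₀^{σ(θ)} sin^{k+l} s ds. Then the map T(r cos θ, r sin θ) := (r cos σ(θ), r sin σ(θ)) pushes the measure c₁ · e^{c(u²+v²)} v^{k+l} du dv on the upper half-plane back to the measure e^{c(x²+y²)} xˡ yᵏ dx dy on the open first quadrant; that is, for every measurable M ⊆ {x>0, y>0}, ∫_M e^{c(x²+y²)} xˡ yᵏ dx dy = c₁ ∫_{T(M)} e^{c(u²+v²)} v^{k+l} du dv. -/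

import Mathlib

/-!
In polar coordinates both densities split into the radial factor `e^{c r²} r^{1+k+l} dr` and an
angular factor: `sinᵏ θ cosˡ θ dθ` on the quadrant, `c₁ sin^{k+l} φ dφ` on the half-plane. `T` is
the identity in `r` and `σ` in the angle, and differentiating the defining equation of `σ` gives
`c₁ σ'(θ) sin^{k+l} (σ θ) = sinᵏ θ cosˡ θ`, so the substitution `φ = σ θ` matches the angular
factors. `σ` is differentiable because it is the primitive of `sinᵏ cosˡ`, divided by `c₁`, composed
with the inverse of the strictly increasing primitive of `sin^{k+l}`.
-/

open Real Set MeasureTheory Filter Topology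

theorem strictMonoOn_primitive {w : ℝ → ℝ} {a b : ℝ} (hw : Continuous w)
    (hpos : ∀ t ∈ Ioo a b, 0 < w t) (x₀ : ℝ) :
    StrictMonoOn (fun x => ∫ t in x₀..x, w t) (Icc a b) := by
  refine strictMonoOn_of_deriv_pos (convex_Icc a b) ?_ fun x hx => ?_
  · exact (intervalIntegral.continuous_primitive (fun _ _ => hw.intervalIntegrable _ _)
      x₀).continuousOn
  · rw [hw.deriv_integral]
    exact hpos x (by simpa using hx)

theorem HasStrictDerivAt.continuousAt_of_comp_left {f g h : ℝ → ℝ} {f' a : ℝ} {s : Set ℝ}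
    (hf : HasStrictDerivAt f f' (g a)) (hf' : f' ≠ 0) (hinj : InjOn f s) (hs : s ∈ 𝓝 (g a))
    (hgs : ∀ᶠ y in 𝓝 a, g y ∈ s) (hh : ContinuousAt h a) (hcomp : f ∘ g =ᶠ[𝓝 a] h) :
    ContinuousAt g a := by
  have hfe := hf.hasStrictFDerivAt_equiv hf'
  set finv := hf.localInverse f f' (g a) hf'
  have hha : h a = f (g a) := hcomp.self_of_nhds.symm
  have hfinv : finv (f (g a)) = g a := hfe.localInverse_apply_image
  have hinv : ContinuousAt finv (h a) := hha ▸ hfe.localInverse_continuousAt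
  have hinv_mem : ∀ᶠ y in 𝓝 a, finv (h y) ∈ s :=
    hh.eventually (hinv.eventually_mem (by rwa [hha, hfinv]))
  have hright : ∀ᶠ y in 𝓝 a, f (finv (h y)) = h y :=
    hh.eventually (hha ▸ hfe.eventually_right_inverse)
  have hg : g =ᶠ[𝓝 a] finv ∘ h := by
    filter_upwards [hgs, hinv_mem, hright, hcomp] with y hy hy' hright hcomp
    exact hinj hy hy' (hcomp.trans hright.symm)
  exact (hinv.comp hh).congr hg.symm

section Reparametrization

variable {F G σ : ℝ → ℝ} {a b c : ℝ}

theorem pos_of_eq_mul_comp (hF : StrictMonoOn F (Icc 0 a)) (hG : MonotoneOn G (Icc 0 b))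
    (hF0 : F 0 = 0) (hG0 : G 0 = 0) (ha : 0 < a) (hσ : MapsTo σ (Icc 0 a) (Icc 0 b))
    (heq : ∀ θ ∈ Icc 0 a, F θ = c * G (σ θ)) : 0 < c := by
  have ha' : a ∈ Icc 0 a := right_mem_Icc.2 ha.le
  have hFa : 0 < F a := hF0 ▸ hF (left_mem_Icc.2 ha.le) ha' ha
  have hGσa : 0 ≤ G (σ a) :=
    hG0 ▸ hG (left_mem_Icc.2 ((hσ ha').1.trans (hσ ha').2)) (hσ ha') (hσ ha').1
  exact pos_of_mul_pos_left (heq a ha' ▸ hFa) hGσa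

theorem mapsTo_Ioo_of_eq_mul_comp (hF : StrictMonoOn F (Icc 0 a))
    (hG : StrictMonoOn G (Icc 0 b)) (hF0 : F 0 = 0) (hG0 : G 0 = 0)
    (hσ : MapsTo σ (Icc 0 a) (Icc 0 b))
    (heq : ∀ θ ∈ Icc 0 a, F θ = c * G (σ θ)) : MapsTo σ (Ioo 0 a) (Ioo 0 b) := by
  intro θ hθ
  have hc := pos_of_eq_mul_comp hF hG.monotoneOn hF0 hG0 (hθ.1.trans hθ.2) hσ heq
  have hθ' : θ ∈ Icc 0 a := Ioo_subset_Icc_self hθ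
  have ha : a ∈ Icc 0 a := right_mem_Icc.2 (hθ.1.trans hθ.2).le
  have h0 : 0 ∈ Icc 0 a := left_mem_Icc.2 (hθ.1.trans hθ.2).le
  have hb : 0 ∈ Icc 0 b := left_mem_Icc.2 ((hσ ha).1.trans (hσ ha).2)
  have hFθ : 0 < c * G (σ θ) := heq θ hθ' ▸ hF0 ▸ hF h0 hθ' hθ.1
  have hGσθ : c * G (σ θ) < c * G (σ a) := heq θ hθ' ▸ heq a ha ▸ hF hθ' ha hθ.2
  have hG0σθ : G 0 < G (σ θ) := by rw [hG0]; exact pos_of_mul_pos_right hFθ hc.le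
  refine ⟨(hG.lt_iff_lt hb (hσ hθ')).1 hG0σθ, ?_⟩
  exact ((hG.lt_iff_lt (hσ hθ') (hσ ha)).1 (lt_of_mul_lt_mul_left hGσθ hc.le)).trans_le
    (hσ ha).2

theorem injOn_of_eq_mul_comp {s : Set ℝ} (hF : InjOn F s)
    (heq : ∀ θ ∈ s, F θ = c * G (σ θ)) : InjOn σ s :=
  fun x hx y hy hxy => hF hx hy (by rw [heq x hx, heq y hy, hxy])

theorem hasDerivAt_of_eq_mul_comp {F' G' θ : ℝ} {s : Set ℝ} (hF : HasDerivAt F F' θ)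
    (hG : HasStrictDerivAt G G' (σ θ)) (hG' : G' ≠ 0) (hinj : InjOn G s) (hs : s ∈ 𝓝 (σ θ))
    (hσs : ∀ᶠ x in 𝓝 θ, σ x ∈ s) (hc : c ≠ 0) (heq : ∀ᶠ x in 𝓝 θ, F x = c * G (σ x)) :
    HasDerivAt σ (F' / c / G') θ := by
  have hcomp : G ∘ σ =ᶠ[𝓝 θ] fun x => F x / c :=
    heq.mono fun x hx => by simp [hx, hc]
  have hFc := hF.div_const c
  exact hG.hasDerivAt.of_comp_left
    (hG.continuousAt_of_comp_left hG' hinj hs hσs hFc.continuousAt hcomp) hFc hG' hcomp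

theorem hasDerivAt_of_integral_eq_mul_integral {w₁ w₂ : ℝ → ℝ} {θ : ℝ}
    (hw₁ : Continuous w₁) (hw₂ : Continuous w₂) (hw₂pos : ∀ t ∈ Ioo 0 b, 0 < w₂ t)
    (hσ : MapsTo σ (Ioo 0 a) (Ioo 0 b)) (hc : c ≠ 0)
    (heq : ∀ θ ∈ Ioo 0 a, ∫ t in 0..θ, w₁ t = c * ∫ t in 0..σ θ, w₂ t) (hθ : θ ∈ Ioo 0 a) :
    HasDerivAt σ (w₁ θ / c / w₂ (σ θ)) θ := by
  have hnhds : Ioo 0 a ∈ 𝓝 θ := Ioo_mem_nhds hθ.1 hθ.2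
  exact hasDerivAt_of_eq_mul_comp (hw₁.integral_hasStrictDerivAt 0 θ).hasDerivAt
    (hw₂.integral_hasStrictDerivAt 0 (σ θ)) (hw₂pos _ (hσ hθ)).ne'
    ((strictMonoOn_primitive hw₂ hw₂pos 0).injOn.mono Ioo_subset_Icc_self)
    (Ioo_mem_nhds (hσ hθ).1 (hσ hθ).2) (eventually_of_mem hnhds hσ) hc
    (eventually_of_mem hnhds heq)

end Reparametrization

section ProdMapId

variable {E : Type*} [NormedAddCommGroup E] [NormedSpace ℝ E]
  {σ σ' : ℝ → ℝ} {s : Set (ℝ × ℝ)} {t : Set ℝ}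

theorem det_id_prodMap_toSpanSingleton (a : ℝ) :
    ((ContinuousLinearMap.id ℝ ℝ).prodMap (ContinuousLinearMap.toSpanSingleton ℝ a)).det = a := by
  simp [ContinuousLinearMap.det, LinearMap.det_prodMap]

theorem hasFDerivWithinAt_prodMap_id (hst : s ⊆ univ ×ˢ t)
    (hσ : ∀ θ ∈ t, HasDerivAt σ (σ' θ) θ) :
    ∀ q ∈ s, HasFDerivWithinAt (Prod.map id σ) ((ContinuousLinearMap.id ℝ ℝ).prodMap
      (ContinuousLinearMap.toSpanSingleton ℝ (σ' q.2))) s q :=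
  fun q hq => ((hasFDerivAt_id q.1).prodMap q (hσ q.2 (hst hq).2).hasFDerivAt).hasFDerivWithinAt

theorem injOn_prodMap_id (hst : s ⊆ univ ×ˢ t) (hinj : InjOn σ t) : InjOn (Prod.map id σ) s :=
  (injOn_id univ |>.prodMap hinj).mono hst

theorem MeasurableSet.image_prodMap_id (hs : MeasurableSet s) (hst : s ⊆ univ ×ˢ t)
    (hσ : ∀ θ ∈ t, HasDerivAt σ (σ' θ) θ) (hinj : InjOn σ t) :
    MeasurableSet (Prod.map id σ '' s) :=
  measurable_image_of_fderivWithin hs (hasFDerivWithinAt_prodMap_id hst hσ)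
    (injOn_prodMap_id hst hinj)

theorem setIntegral_image_prodMap_id (hs : MeasurableSet s) (hst : s ⊆ univ ×ˢ t)
    (hσ : ∀ θ ∈ t, HasDerivAt σ (σ' θ) θ) (hinj : InjOn σ t) (g : ℝ × ℝ → E) :
    ∫ p in Prod.map id σ '' s, g p = ∫ q in s, |σ' q.2| • g (q.1, σ q.2) := by
  rw [integral_image_eq_integral_abs_det_fderiv_smul volume hs
    (hasFDerivWithinAt_prodMap_id hst hσ) (injOn_prodMap_id hst hinj)]
  simp only [det_id_prodMap_toSpanSingleton]
  rfl

end ProdMapId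

section Polar

variable {E : Type*} [NormedAddCommGroup E] [NormedSpace ℝ E]

theorem setIntegral_image_polarCoord_symm {s : Set (ℝ × ℝ)} (hs : MeasurableSet s)
    (hst : s ⊆ polarCoord.target) (f : ℝ × ℝ → E) :
    ∫ p in polarCoord.symm '' s, f p = ∫ q in s, q.1 • f (polarCoord.symm q) := by
  rw [integral_image_eq_integral_abs_det_fderiv_smul volume hs
    (fun q _ => (hasFDerivAt_polarCoord_symm q).hasFDerivWithinAt)
    (polarCoord.symm.injOn.mono (by rwa [OpenPartialHomeomorph.symm_source]))]
  refine setIntegral_congr_fun hs fun q hq => ?_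
  rw [det_fderivPolarCoordSymm, abs_of_pos (hst hq).1]

theorem mem_Ioo_of_cos_pos_of_sin_pos {θ : ℝ} (hθ : θ ∈ Ioo (-π) π) (hcos : 0 < cos θ)
    (hsin : 0 < sin θ) : θ ∈ Ioo 0 (π / 2) := by
  constructor
  · by_contra! h
    exact hsin.not_ge (sin_nonpos_of_nonpos_of_neg_pi_le h hθ.1.le)
  · by_contra! h
    exact hcos.not_ge (cos_nonpos_of_pi_div_two_le_of_le h (by linarith [hθ.2, pi_pos]))

theorem polarCoord_image_subset_of_subset_firstQuadrant {M : Set (ℝ × ℝ)}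
    (hM : M ⊆ {p | 0 < p.1 ∧ 0 < p.2}) : polarCoord '' M ⊆ Ioi 0 ×ˢ Ioo 0 (π / 2) := by
  rintro _ ⟨p, hp, rfl⟩
  obtain ⟨hr, hθ⟩ := polarCoord.map_source (Or.inl (hM hp).1 : p ∈ polarCoord.source)
  have hp' := hM hp
  rw [← polarCoord.left_inv (Or.inl hp'.1 : p ∈ polarCoord.source)] at hp'
  exact ⟨hr, mem_Ioo_of_cos_pos_of_sin_pos hθ (pos_of_mul_pos_right hp'.1 (le_of_lt hr))
    (pos_of_mul_pos_right hp'.2 (le_of_lt hr))⟩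

theorem measurableSet_polarCoord_image {M : Set (ℝ × ℝ)} (hM : MeasurableSet M)
    (hMs : M ⊆ polarCoord.source) : MeasurableSet (polarCoord '' M) := by
  rw [polarCoord.image_eq_target_inter_inv_preimage hMs]
  exact polarCoord.open_target.measurableSet.inter
    (hM.preimage continuous_polarCoord_symm.measurable)

theorem polarCoord_symm_image_polarCoord_image {M : Set (ℝ × ℝ)}
    (hMs : M ⊆ polarCoord.source) : polarCoord.symm '' (polarCoord '' M) = M :=
  polarCoord.toPartialEquiv.symm_image_image_of_subset_source hMs

theorem setIntegral_eq_setIntegral_polarCoord_image {M : Set (ℝ × ℝ)} (hM : MeasurableSet M)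
    (hMs : M ⊆ polarCoord.source) (f : ℝ × ℝ → E) :
    ∫ p in M, f p = ∫ q in polarCoord '' M, q.1 • f (polarCoord.symm q) := by
  rw [← setIntegral_image_polarCoord_symm (measurableSet_polarCoord_image hM hMs)
    (polarCoord.mapsTo.mono_left hMs).image_subset,
    polarCoord_symm_image_polarCoord_image hMs]

theorem setIntegral_image_polar_angle_map {σ σ' : ℝ → ℝ} {T : ℝ × ℝ → ℝ × ℝ}
    {M : Set (ℝ × ℝ)} (hσ : ∀ θ ∈ Ioo 0 (π / 2), HasDerivAt σ (σ' θ) θ)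
    (hinj : InjOn σ (Ioo 0 (π / 2))) (hmaps : MapsTo σ (Ioo 0 (π / 2)) (Ioo (-π) π))
    (hT : ∀ r θ : ℝ, 0 < r → θ ∈ Ioo 0 (π / 2) →
      T (r * cos θ, r * sin θ) = (r * cos (σ θ), r * sin (σ θ)))
    (hM : MeasurableSet M) (hMQ : M ⊆ {p | 0 < p.1 ∧ 0 < p.2}) (g : ℝ × ℝ → E) :
    ∫ p in T '' M, g p =
      ∫ q in polarCoord '' M, |σ' q.2| • q.1 • g (polarCoord.symm (q.1, σ q.2)) := by
  have hMs : M ⊆ polarCoord.source := fun p hp => Or.inl (hMQ hp).1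
  set S := polarCoord '' M
  have hS : MeasurableSet S := measurableSet_polarCoord_image hM hMs
  have hSQ : S ⊆ Ioi 0 ×ˢ Ioo 0 (π / 2) := polarCoord_image_subset_of_subset_firstQuadrant hMQ
  have hSt : S ⊆ univ ×ˢ Ioo 0 (π / 2) := hSQ.trans (prod_mono (subset_univ _) subset_rfl)
  have hTM : T '' M = polarCoord.symm '' (Prod.map id σ '' S) := calc
    T '' M = T '' (polarCoord.symm '' S) := by rw [polarCoord_symm_image_polarCoord_image hMs]
    _ = (T ∘ polarCoord.symm) '' S := (image_comp _ _ _).symm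
    _ = (polarCoord.symm ∘ Prod.map id σ) '' S :=
      image_congr fun q hq => hT q.1 q.2 (hSQ hq).1 (hSQ hq).2
    _ = polarCoord.symm '' (Prod.map id σ '' S) := image_comp _ _ _
  have hTtarget : Prod.map id σ '' S ⊆ polarCoord.target := by
    rintro _ ⟨q, hq, rfl⟩
    exact ⟨(hSQ hq).1, hmaps (hSQ hq).2⟩
  rw [hTM, setIntegral_image_polarCoord_symm (hS.image_prodMap_id hSt hσ hinj) hTtarget,
    setIntegral_image_prodMap_id hS hSt hσ hinj]

end Polar

theorem sin_pos_and_cos_pos_of_mem_Ioo {θ : ℝ} (hθ : θ ∈ Ioo 0 (π / 2)) :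
    0 < sin θ ∧ 0 < cos θ :=
  ⟨sin_pos_of_pos_of_lt_pi hθ.1 (by linarith [hθ.2, pi_pos]),
    cos_pos_of_mem_Ioo ⟨by linarith [hθ.1, pi_pos], hθ.2⟩⟩

theorem polar_weight_eq {c k l c₁ r θ φ : ℝ} (hr : 0 < r) (hθ : θ ∈ Ioo 0 (π / 2))
    (hφ : 0 < sin φ) (hc₁ : 0 < c₁) :
    r * (exp (c * ((r * cos θ) ^ 2 + (r * sin θ) ^ 2)) * (r * cos θ) ^ l * (r * sin θ) ^ k) =
      c₁ * (|sin θ ^ k * cos θ ^ l / c₁ / sin φ ^ (k + l)| *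
        (r * (exp (c * ((r * cos φ) ^ 2 + (r * sin φ) ^ 2)) * (r * sin φ) ^ (k + l)))) := by
  obtain ⟨hsin, hcos⟩ := sin_pos_and_cos_pos_of_mem_Ioo hθ
  have hsinφ : 0 < sin φ ^ (k + l) := rpow_pos_of_pos hφ _
  have hnorm (α : ℝ) : (r * cos α) ^ 2 + (r * sin α) ^ 2 = r ^ 2 := by
    linear_combination r ^ 2 * cos_sq_add_sin_sq α
  rw [hnorm, hnorm, abs_of_pos (by positivity), mul_rpow hr.le hcos.le, mul_rpow hr.le hsin.le,
    mul_rpow hr.le hφ.le, rpow_add hr]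
  field_simp

theorem stmt_7_general (c k l : ℝ) (hk : 0 < k) (hl : 0 < l)
    (c₁ : ℝ)
    (σ : ℝ → ℝ)
    (hσmem : ∀ θ ∈ Icc 0 (π / 2), σ θ ∈ Icc 0 π)
    (hσeq : ∀ θ ∈ Icc 0 (π / 2),
      (∫ t in (0:ℝ)..θ, Real.sin t ^ k * Real.cos t ^ l) =
        c₁ * ∫ s in (0:ℝ)..(σ θ), Real.sin s ^ (k + l))
    (T : ℝ × ℝ → ℝ × ℝ)
    (hT : ∀ r θ : ℝ, 0 < r → θ ∈ Ioo 0 (π / 2) →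
      T (r * Real.cos θ, r * Real.sin θ) = (r * Real.cos (σ θ), r * Real.sin (σ θ)))
    (M : Set (ℝ × ℝ)) (hM : MeasurableSet M)
    (hMW : M ⊆ {p : ℝ × ℝ | 0 < p.1 ∧ 0 < p.2}) :
    (∫ p in M, Real.exp (c * (p.1 ^ 2 + p.2 ^ 2)) * p.1 ^ l * p.2 ^ k) =
      c₁ * ∫ p in T '' M, Real.exp (c * (p.1 ^ 2 + p.2 ^ 2)) * p.2 ^ (k + l) := by
  have hw₁ : Continuous fun t => sin t ^ k * cos t ^ l := by fun_prop (disch := positivity)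
  have hw₂ : Continuous fun t => sin t ^ (k + l) := by fun_prop (disch := positivity)
  have hw₁pos : ∀ t ∈ Ioo 0 (π / 2), 0 < sin t ^ k * cos t ^ l := fun t ht =>
    mul_pos (rpow_pos_of_pos (sin_pos_and_cos_pos_of_mem_Ioo ht).1 _)
      (rpow_pos_of_pos (sin_pos_and_cos_pos_of_mem_Ioo ht).2 _)
  have hw₂pos : ∀ t ∈ Ioo 0 π, 0 < sin t ^ (k + l) := fun t ht =>
    rpow_pos_of_pos (sin_pos_of_pos_of_lt_pi ht.1 ht.2) _
  have hF := strictMonoOn_primitive hw₁ hw₁pos 0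
  have hG := strictMonoOn_primitive hw₂ hw₂pos 0
  have hc₁ : 0 < c₁ := pos_of_eq_mul_comp hF hG.monotoneOn intervalIntegral.integral_same
    intervalIntegral.integral_same (by positivity) hσmem hσeq
  have hmaps := mapsTo_Ioo_of_eq_mul_comp hF hG intervalIntegral.integral_same
    intervalIntegral.integral_same hσmem hσeq
  have hσ' := fun θ => hasDerivAt_of_integral_eq_mul_integral (θ := θ) hw₁ hw₂ hw₂pos hmaps
    hc₁.ne' fun θ hθ => hσeq θ (Ioo_subset_Icc_self hθ)
  have hinj := (injOn_of_eq_mul_comp hF.injOn (G := fun x => ∫ s in 0..x, sin s ^ (k + l))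
    hσeq).mono Ioo_subset_Icc_self
  have hMs : M ⊆ polarCoord.source := fun p hp => Or.inl (hMW hp).1
  rw [setIntegral_eq_setIntegral_polarCoord_image hM hMs,
    setIntegral_image_polar_angle_map hσ' hinj
      (hmaps.mono_right (Ioo_subset_Ioo_left (by linarith [pi_pos]))) hT hM hMW,
    ← integral_const_mul]
  refine setIntegral_congr_fun (measurableSet_polarCoord_image hM hMs) fun q hq => ?_
  obtain ⟨hr, hθ⟩ := polarCoord_image_subset_of_subset_firstQuadrant hMW hq
  simpa only [polarCoord_symm_apply, smul_eq_mul] using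
    polar_weight_eq hr hθ (sin_pos_of_pos_of_lt_pi (hmaps hθ).1 (hmaps hθ).2) hc₁

theorem stmt_7 (c k l : ℝ) (hc : 0 ≤ c) (hk : 0 < k) (hl : 0 < l)
    (c₁ : ℝ)
    (hc₁ : c₁ = (∫ t in (0:ℝ)..(π / 2), Real.sin t ^ k * Real.cos t ^ l) /
        (∫ s in (0:ℝ)..π, Real.sin s ^ (k + l)))
    (σ : ℝ → ℝ)
    (hσmem : ∀ θ ∈ Icc 0 (π / 2), σ θ ∈ Icc 0 π)
    (hσeq : ∀ θ ∈ Icc 0 (π / 2),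
      (∫ t in (0:ℝ)..θ, Real.sin t ^ k * Real.cos t ^ l) =
        c₁ * ∫ s in (0:ℝ)..(σ θ), Real.sin s ^ (k + l))
    (T : ℝ × ℝ → ℝ × ℝ)
    (hT : ∀ r θ : ℝ, 0 < r → θ ∈ Ioo 0 (π / 2) →
      T (r * Real.cos θ, r * Real.sin θ) = (r * Real.cos (σ θ), r * Real.sin (σ θ)))
    (M : Set (ℝ × ℝ)) (hM : MeasurableSet M)
    (hMW : M ⊆ {p : ℝ × ℝ | 0 < p.1 ∧ 0 < p.2}) :
    (∫ p in M, Real.exp (c * (p.1 ^ 2 + p.2 ^ 2)) * p.1 ^ l * p.2 ^ k) =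
      c₁ * ∫ p in T '' M, Real.exp (c * (p.1 ^ 2 + p.2 ^ 2)) * p.2 ^ (k + l) :=
  stmt_7_general c k l hk hl c₁ σ hσmem hσeq T hT M hM hMW
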